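/- CN EXIT function tends to 1 at the all-ones point: Let δ be a check-node type whose local code (the row space of an h_δ × s_δ generator matrix G_δ over GF(2) of rank h_δ) has minimum Hamming weight at least 2, with coordinates typed by E. Then for every e ∈ E with s_{δ,e} > 0, I_{EC,e}^{(δ)}(I) → 1 as I → (1,…,1); equivalently, I_{EC,e}^{(δ)}((1,…,1)) = 1. -/

import Mathlib

open scoped Classical

noncomputable section

namespace MET

/-- Hamming weight of a binary vector. -/
def hWeight {m : ℕ} (x : Fin m → ZMod 2) : ℕ :=
  (Finset.univ.filter fun i => x i ≠ 0).card

/-- The row space of `G` (the local code) has minimum Hamming weight at least 2. -/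
def HasMinDistGE2 {k q : ℕ} (G : Matrix (Fin k) (Fin q) (ZMod 2)) : Prop :=
  ∀ x : Fin k → ZMod 2, Matrix.vecMul x G ≠ 0 → 2 ≤ hWeight (Matrix.vecMul x G)

/-- The row space of `G` has minimum Hamming weight exactly 2. -/
def HasMinDistEq2 {k q : ℕ} (G : Matrix (Fin k) (Fin q) (ZMod 2)) : Prop :=
  HasMinDistGE2 G ∧ ∃ x : Fin k → ZMod 2, hWeight (Matrix.vecMul x G) = 2

/-- The weight-2 vector supported on `{i,j}`. -/
def wt2vec {q : ℕ} (i j : Fin q) : Fin q → ZMod 2 :=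
  fun r => if r = i ∨ r = j then 1 else 0

/-- Number of columns of edge type `l`. -/
def colCount {q n : ℕ} (τ : Fin q → Fin n) (l : Fin n) : ℕ :=
  (Finset.univ.filter fun j => τ j = l).card

/-- Rank of the matrix formed by the columns of `G` indexed by `A` together with the columns
of the `k × k` identity matrix indexed by `T`. -/
def colRank {k q : ℕ} (G : Matrix (Fin k) (Fin q) (ZMod 2))
    (A : Finset (Fin q)) (T : Finset (Fin k)) : ℕ :=
  Matrix.rank (Matrix.of fun (i : Fin k) (j : {x // x ∈ A} ⊕ {x // x ∈ T}) =>
    Sum.elim (fun a => G i a.1) (fun t => if i = t.1 then (1 : ZMod 2) else 0) j)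

/-- Multi-type split information function `ẽ_{g;u}` of a VN generator matrix. -/
def eTilde {n k q : ℕ} (G : Matrix (Fin k) (Fin q) (ZMod 2)) (τ : Fin q → Fin n)
    (g : Fin n → ℕ) (u : ℕ) : ℕ :=
  ∑ A ∈ Finset.univ.filter (fun A : Finset (Fin q) =>
      ∀ l, (A.filter fun j => τ j = l).card = g l),
    ∑ T ∈ Finset.univ.filter (fun T : Finset (Fin k) => T.card = u),
      colRank G A T

/-- Multi-type information function `ẽ_g` of a CN generator matrix. -/
def eTildeC {n h s : ℕ} (G : Matrix (Fin h) (Fin s) (ZMod 2)) (τ : Fin s → Fin n)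
    (g : Fin n → ℕ) : ℕ :=
  ∑ A ∈ Finset.univ.filter (fun A : Finset (Fin s) =>
      ∀ l, (A.filter fun j => τ j = l).card = g l),
    colRank G A ∅

/-- `χ_{2,u}(l,m)`: ordered pairs of distinct columns of types `l,m` supporting a weight-2
codeword generated by a weight-`u` input word. -/
def chi2 {n k q : ℕ} (G : Matrix (Fin k) (Fin q) (ZMod 2)) (τ : Fin q → Fin n)
    (u : ℕ) (l m : Fin n) : ℕ :=
  (Finset.univ.filter fun p : Fin q × Fin q =>
    p.1 ≠ p.2 ∧ τ p.1 = l ∧ τ p.2 = m ∧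
      ∃ x : Fin k → ZMod 2, hWeight x = u ∧ Matrix.vecMul x G = wt2vec p.1 p.2).card

/-- `ξ_2(l,m)`: ordered pairs of distinct coordinates of types `l,m` supporting a weight-2
codeword of the row space. -/
def xi2 {n h s : ℕ} (G : Matrix (Fin h) (Fin s) (ZMod 2)) (τ : Fin s → Fin n)
    (l m : Fin n) : ℕ :=
  (Finset.univ.filter fun p : Fin s × Fin s =>
    p.1 ≠ p.2 ∧ τ p.1 = l ∧ τ p.2 = m ∧
      ∃ x : Fin h → ZMod 2, Matrix.vecMul x G = wt2vec p.1 p.2).card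

/-- Range of the tuple `t`: `0 ≤ t l ≤ q l` for `l ≠ e` and `0 ≤ t e ≤ q e - 1`. -/
def tRange {n : ℕ} (q : Fin n → ℕ) (e : Fin n) : Finset (Fin n → ℕ) :=
  Fintype.piFinset fun l => Finset.range (if l = e then q l else q l + 1)

/-- The coefficient `a^{(γ,e)}_{t,z}` of the VN EXIT function. -/
def aVN {n k q : ℕ} (G : Matrix (Fin k) (Fin q) (ZMod 2)) (τ : Fin q → Fin n)
    (e : Fin n) (t : Fin n → ℕ) (z : ℕ) : ℝ :=
  ((colCount τ e - t e : ℕ) : ℝ) *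
      (eTilde G τ (fun l => colCount τ l - t l) (k - z) : ℝ)
    - ((t e + 1 : ℕ) : ℝ) *
      (eTilde G τ (fun l => colCount τ l - t l - (if l = e then 1 else 0)) (k - z) : ℝ)

/-- The coefficient `a^{(δ,e)}_{t}` of the CN EXIT function. -/
def aCN {n h s : ℕ} (G : Matrix (Fin h) (Fin s) (ZMod 2)) (τ : Fin s → Fin n)
    (e : Fin n) (t : Fin n → ℕ) : ℝ :=
  ((colCount τ e - t e : ℕ) : ℝ) *
      (eTildeC G τ (fun l => colCount τ l - t l) : ℝ)
    - ((t e + 1 : ℕ) : ℝ) *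
      (eTildeC G τ (fun l => colCount τ l - t l - (if l = e then 1 else 0)) : ℝ)

/-- Per-type VN EXIT function `I_{EV,e}^{(γ)}(I, ε)`. -/
def IEV {n k q : ℕ} (G : Matrix (Fin k) (Fin q) (ZMod 2)) (τ : Fin q → Fin n)
    (e : Fin n) (I : Fin n → ℝ) (ε : ℝ) : ℝ :=
  1 - (1 / (colCount τ e : ℝ)) *
    ∑ z ∈ Finset.range (k + 1), ε ^ z * (1 - ε) ^ (k - z) *
      ∑ t ∈ tRange (colCount τ) e,
        (∏ l, (1 - I l) ^ t l * (I l) ^ (colCount τ l - t l - (if l = e then 1 else 0))) *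
          aVN G τ e t z

/-- Per-type CN EXIT function `I_{EC,e}^{(δ)}(I)`. -/
def IEC {n h s : ℕ} (G : Matrix (Fin h) (Fin s) (ZMod 2)) (τ : Fin s → Fin n)
    (e : Fin n) (I : Fin n → ℝ) : ℝ :=
  1 - (1 / (colCount τ e : ℝ)) *
    ∑ t ∈ tRange (colCount τ) e,
      (∏ l, (1 - I l) ^ t l * (I l) ^ (colCount τ l - t l - (if l = e then 1 else 0))) *
        aCN G τ e t

/-- A variable node type: a `k × q` generator matrix over `GF(2)` with a typing of its
columns by edge types (no punctured bits). -/
structure VNType (n : ℕ) where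
  k : ℕ
  q : ℕ
  G : Matrix (Fin k) (Fin q) (ZMod 2)
  τ : Fin q → Fin n

/-- A check node type: an `h × s` generator matrix over `GF(2)` with a typing of its
columns by edge types. -/
structure CNType (n : ℕ) where
  h : ℕ
  s : ℕ
  G : Matrix (Fin h) (Fin s) (ZMod 2)
  τ : Fin s → Fin n

/-- The variable-node side of a MET D-GLDPC ensemble. -/
structure VNSide (n : ℕ) where
  nV : ℕ
  vn : Fin nV → VNType n
  lam : Fin nV → Fin n → ℝ
  lam_nonneg : ∀ γ l, 0 ≤ lam γ l
  lam_sum : ∀ l, ∑ γ, lam γ l = 1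
  lam_pos_iff : ∀ γ l, 0 < lam γ l ↔ 0 < colCount (vn γ).τ l

/-- The check-node side of a MET D-GLDPC ensemble. -/
structure CNSide (n : ℕ) where
  nC : ℕ
  cn : Fin nC → CNType n
  rho : Fin nC → Fin n → ℝ
  rho_nonneg : ∀ δ l, 0 ≤ rho δ l
  rho_sum : ∀ l, ∑ δ, rho δ l = 1
  rho_pos_iff : ∀ δ l, 0 < rho δ l ↔ 0 < colCount (cn δ).τ l

/-- A MET D-GLDPC ensemble. -/
structure Ensemble (n : ℕ) extends VNSide n, CNSide n

/-- All VN local codes have full-rank generator matrix and minimum distance at least 2. -/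
def VNSide.Good {n : ℕ} (V : VNSide n) : Prop :=
  ∀ γ, ((V.vn γ).G).rank = (V.vn γ).k ∧ HasMinDistGE2 (V.vn γ).G

/-- All CN local codes have full-rank generator matrix and minimum distance at least 2. -/
def CNSide.Good {n : ℕ} (C : CNSide n) : Prop :=
  ∀ δ, ((C.cn δ).G).rank = (C.cn δ).h ∧ HasMinDistGE2 (C.cn δ).G

/-- The matrix `P(ε)` with entries `P^{l,m}(ε)`. -/
def Pmat {n : ℕ} (V : VNSide n) (ε : ℝ) : Matrix (Fin n) (Fin n) ℝ :=
  Matrix.of fun l m =>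
    ∑ γ, if HasMinDistEq2 (V.vn γ).G then
      (V.lam γ l / (colCount (V.vn γ).τ l : ℝ)) *
        ∑ u ∈ Finset.Icc 1 (V.vn γ).k, (chi2 (V.vn γ).G (V.vn γ).τ u l m : ℝ) * ε ^ u
    else 0

/-- The matrix `C` with entries `C^{l,m}`. -/
def Cmat {n : ℕ} (C : CNSide n) : Matrix (Fin n) (Fin n) ℝ :=
  Matrix.of fun l m =>
    ∑ δ, if HasMinDistEq2 (C.cn δ).G then
      (C.rho δ l / (colCount (C.cn δ).τ l : ℝ)) * (xi2 (C.cn δ).G (C.cn δ).τ l m : ℝ)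
    else 0

/-- Aggregate VN EXIT function `I_{EV,e}(I,ε)`. -/
def IEVagg {n : ℕ} (V : VNSide n) (e : Fin n) (I : Fin n → ℝ) (ε : ℝ) : ℝ :=
  ∑ γ ∈ Finset.univ.filter (fun γ => 0 < V.lam γ e),
    V.lam γ e * IEV (V.vn γ).G (V.vn γ).τ e I ε

/-- Aggregate CN EXIT function `I_{EC,e}(I)`. -/
def IECagg {n : ℕ} (C : CNSide n) (e : Fin n) (I : Fin n → ℝ) : ℝ :=
  ∑ δ ∈ Finset.univ.filter (fun δ => 0 < C.rho δ e),
    C.rho δ e * IEC (C.cn δ).G (C.cn δ).τ e I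

/-- The EXIT recursion `f(·,ε)`. -/
def exitMap {n : ℕ} (E : Ensemble n) (ε : ℝ) (I : Fin n → ℝ) : Fin n → ℝ :=
  fun e => IEVagg E.toVNSide e (fun m => IECagg E.toCNSide m I) ε

/-- Local stability of the fixed point `1` of the EXIT recursion. -/
def LocallyStable {n : ℕ} (E : Ensemble n) (ε : ℝ) : Prop :=
  ∃ U : Set (Fin n → ℝ), IsOpen U ∧ (fun _ => (1 : ℝ)) ∈ U ∧
    ∀ I ∈ U ∩ Set.Icc (fun _ => (0 : ℝ)) (fun _ => (1 : ℝ)),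
      Filter.Tendsto (fun m => (exitMap E ε)^[m] I) Filter.atTop (nhds fun _ => (1 : ℝ))

/-- Spectral radius of a real square matrix: the maximum modulus of its complex
eigenvalues. -/
def specRad {m : ℕ} (A : Matrix (Fin m) (Fin m) ℝ) : ℝ :=
  (spectralRadius ℂ (A.map fun x : ℝ => (x : ℂ))).toReal

/-! At `I = 1` every term of `I_{EC,e}` with `t ≠ 0` carries a factor `(1 - 1) ^ t_l = 0`, so only
`a_0 = s_e ẽ_s - ẽ_{s - 1_e}` survives. Minimum distance at least `2` means that no nonzero codeword
is supported on a single coordinate, so deleting at most one column of `G` does not lower its rank: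
`ẽ_s = rank G`, and `ẽ_{s - 1_e}` sums `rank G` over the `s_e` ways of deleting a type-`e` column.
Hence `a_0 = 0`, and the limit follows since `I_{EC,e}` is a polynomial. -/

open Finset

theorem rank_submatrix_id_eq_of_vecMul {K m n₀ n : Type*} [Field K] [Fintype m] [Fintype n₀]
    [Fintype n] (A : Matrix m n K) (c : n₀ → n)
    (hc : ∀ x : m → K, Matrix.vecMul x A ∘ c = 0 → Matrix.vecMul x A = 0) :
    (A.submatrix id c).rank = A.rank := by
  rw [← Matrix.rank_transpose, ← Matrix.rank_transpose A, Matrix.rank, Matrix.rank,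
    Matrix.mulVecLin_transpose, Matrix.mulVecLin_transpose]
  have hcomp : (A.submatrix id c).vecMulLinear = LinearMap.funLeft K K c ∘ₗ A.vecMulLinear := by
    ext x j
    simp [Matrix.vecMul, dotProduct, Pi.single_apply]
  have hinj : Function.Injective
      ((LinearMap.funLeft K K c).domRestrict (LinearMap.range A.vecMulLinear)) := by
    rw [LinearMap.injective_domRestrict_iff, Submodule.disjoint_def]
    rintro _ ⟨x, rfl⟩ hx
    exact hc x hx
  rw [hcomp, LinearMap.range_comp, ← LinearMap.range_domRestrict,
    LinearMap.finrank_range_of_inj hinj]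

theorem HasMinDistGE2.vecMul_eq_zero {h s : ℕ} {G : Matrix (Fin h) (Fin s) (ZMod 2)}
    (hmd : HasMinDistGE2 G) {A : Finset (Fin s)} (hA : Aᶜ.card ≤ 1) (x : Fin h → ZMod 2)
    (hx : ∀ a ∈ A, Matrix.vecMul x G a = 0) : Matrix.vecMul x G = 0 := by
  by_contra hne
  have hsupp : hWeight (Matrix.vecMul x G) ≤ Aᶜ.card :=
    card_le_card fun j hj => mem_compl.2 fun hjA => (mem_filter.1 hj).2 (hx j hjA)
  have := hmd x hne
  omega

theorem colRank_empty {h s : ℕ} (G : Matrix (Fin h) (Fin s) (ZMod 2)) (A : Finset (Fin s)) :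
    colRank G A ∅ = (G.submatrix id ((↑) : A → Fin s)).rank := by
  rw [colRank, ← Matrix.rank_reindex (Equiv.refl _) (Equiv.sumEmpty A (∅ : Finset (Fin h)))]
  rfl

theorem colRank_empty_eq_rank {h s : ℕ} {G : Matrix (Fin h) (Fin s) (ZMod 2)}
    (hmd : HasMinDistGE2 G) {A : Finset (Fin s)} (hA : Aᶜ.card ≤ 1) :
    colRank G A ∅ = G.rank := by
  rw [colRank_empty, rank_submatrix_id_eq_of_vecMul]
  exact fun x hx => hmd.vecMul_eq_zero hA x fun a ha => congr_fun hx ⟨a, ha⟩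

def typedSubsets {n s : ℕ} (τ : Fin s → Fin n) (g : Fin n → ℕ) : Finset (Finset (Fin s)) :=
  univ.filter fun A => ∀ l, (A.filter fun j => τ j = l).card = g l

theorem eTildeC_eq_sum_typedSubsets {n h s : ℕ} (G : Matrix (Fin h) (Fin s) (ZMod 2))
    (τ : Fin s → Fin n) (g : Fin n → ℕ) :
    eTildeC G τ g = ∑ A ∈ typedSubsets τ g, colRank G A ∅ :=
  rfl

theorem card_eq_sum_of_mem_typedSubsets {n s : ℕ} {τ : Fin s → Fin n} {g : Fin n → ℕ}
    {A : Finset (Fin s)} (hA : A ∈ typedSubsets τ g) : A.card = ∑ l, g l := by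
  rw [card_eq_sum_card_fiberwise fun j _ => mem_univ (τ j)]
  exact sum_congr rfl fun l _ => (mem_filter.1 hA).2 l

theorem sum_colCount {n s : ℕ} (τ : Fin s → Fin n) : ∑ l, colCount τ l = s := by
  have := card_eq_sum_of_mem_typedSubsets (g := colCount τ) (A := univ)
    (mem_filter.2 ⟨mem_univ _, fun _ => rfl⟩)
  rwa [card_univ, Fintype.card_fin, eq_comm] at this

theorem sum_colCount_sub_single {n s : ℕ} {τ : Fin s → Fin n} {e : Fin n}
    (he : 0 < colCount τ e) : ∑ l, (colCount τ l - if l = e then 1 else 0) + 1 = s := by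
  have hterm : ∀ l, (colCount τ l - if l = e then 1 else 0) + (if l = e then 1 else 0) =
      colCount τ l := by
    intro l
    split_ifs with hl
    · subst hl
      omega
    · rfl
  calc ∑ l, (colCount τ l - if l = e then 1 else 0) + 1
      = ∑ l, ((colCount τ l - if l = e then 1 else 0) + if l = e then 1 else 0) := by
        rw [sum_add_distrib, sum_ite_eq' univ e, if_pos (mem_univ e)]
    _ = s := by rw [sum_congr rfl fun l _ => hterm l, sum_colCount]

theorem eTildeC_eq_rank_mul_card {n h s : ℕ} {G : Matrix (Fin h) (Fin s) (ZMod 2)}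
    (hmd : HasMinDistGE2 G) (τ : Fin s → Fin n) {g : Fin n → ℕ} (hg : s ≤ ∑ l, g l + 1) :
    eTildeC G τ g = G.rank * (typedSubsets τ g).card := by
  rw [eTildeC_eq_sum_typedSubsets, sum_const_nat, mul_comm]
  intro A hA
  apply colRank_empty_eq_rank hmd
  rw [card_compl, Fintype.card_fin, card_eq_sum_of_mem_typedSubsets hA]
  omega

theorem typedSubsets_colCount {n s : ℕ} (τ : Fin s → Fin n) :
    typedSubsets τ (colCount τ) = {univ} := by
  ext A
  rw [mem_singleton]
  constructor
  · intro hA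
    rw [← card_eq_iff_eq_univ, card_eq_sum_of_mem_typedSubsets hA, sum_colCount, Fintype.card_fin]
  · rintro rfl
    exact mem_filter.2 ⟨mem_univ _, fun _ => rfl⟩

theorem typedSubsets_colCount_sub_single {n s : ℕ} {τ : Fin s → Fin n} {e : Fin n}
    (he : 0 < colCount τ e) :
    typedSubsets τ (fun l => colCount τ l - if l = e then 1 else 0) =
      (univ.filter fun j => τ j = e).image univ.erase := by
  ext A
  simp only [mem_image, mem_filter, mem_univ, true_and]
  constructor
  · intro hA
    have hcompl : Aᶜ.card = 1 := by
      rw [card_compl, Fintype.card_fin, card_eq_sum_of_mem_typedSubsets hA]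
      have := sum_colCount_sub_single he
      omega
    obtain ⟨j, hj⟩ := card_eq_one.1 hcompl
    have hAj : A = univ.erase j := by rw [← compl_singleton, ← hj, compl_compl]
    refine ⟨j, ?_, hAj.symm⟩
    by_contra hje
    -- otherwise `A` contains all columns of type `τ j`, among them `j`
    have hfull : (A.filter fun i => τ i = τ j).card = colCount τ (τ j) := by
      simpa [hje] using (mem_filter.1 hA).2 (τ j)
    have hsame := eq_of_subset_of_card_le (filter_subset_filter _ (subset_univ A)) hfull.ge
    have hjA : j ∈ A.filter fun i => τ i = τ j := hsame ▸ mem_filter.2 ⟨mem_univ j, rfl⟩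
    simp [hAj] at hjA
  · rintro ⟨j, hj, rfl⟩
    refine mem_filter.2 ⟨mem_univ _, fun l => ?_⟩
    rw [filter_erase]
    show _ = colCount τ l - if l = e then 1 else 0
    split_ifs with hl
    · rw [card_erase_of_mem (mem_filter.2 ⟨mem_univ j, hj.trans hl.symm⟩)]
      rfl
    · rw [erase_eq_of_notMem fun hmem => hl ((mem_filter.1 hmem).2.symm.trans hj)]
      rfl

theorem card_typedSubsets_colCount_sub_single {n s : ℕ} {τ : Fin s → Fin n} {e : Fin n}
    (he : 0 < colCount τ e) :
    (typedSubsets τ (fun l => colCount τ l - if l = e then 1 else 0)).card = colCount τ e := by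
  rw [typedSubsets_colCount_sub_single he,
    card_image_of_injective _ fun x y hxy => (erase_inj univ (mem_univ x)).1 hxy]
  rfl

theorem aCN_zero {n h s : ℕ} {G : Matrix (Fin h) (Fin s) (ZMod 2)} (hmd : HasMinDistGE2 G)
    {τ : Fin s → Fin n} {e : Fin n} (he : 0 < colCount τ e) : aCN G τ e 0 = 0 := by
  simp only [aCN, Pi.zero_apply, Nat.sub_zero, zero_add]
  rw [eTildeC_eq_rank_mul_card hmd τ (by rw [sum_colCount]; omega),
    eTildeC_eq_rank_mul_card hmd τ (sum_colCount_sub_single he).ge, typedSubsets_colCount,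
    card_typedSubsets_colCount_sub_single he, card_singleton]
  push_cast
  ring

theorem IEC_one {n h s : ℕ} {G : Matrix (Fin h) (Fin s) (ZMod 2)} (hmd : HasMinDistGE2 G)
    (τ : Fin s → Fin n) (e : Fin n) : IEC G τ e (fun _ => 1) = 1 := by
  rw [IEC, sum_eq_zero, mul_zero, sub_zero]
  intro t ht
  by_cases ht0 : t = 0
  · have he : 0 < colCount τ e := by
      simpa [tRange, ht0] using Fintype.mem_piFinset.1 ht e
    rw [ht0, aCN_zero hmd he, mul_zero]
  · obtain ⟨l, hl⟩ := Function.ne_iff.1 ht0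
    rw [prod_eq_zero (mem_univ l) (by simp [zero_pow hl]), zero_mul]

theorem continuous_IEC {n h s : ℕ} (G : Matrix (Fin h) (Fin s) (ZMod 2)) (τ : Fin s → Fin n)
    (e : Fin n) : Continuous (IEC G τ e) := by
  unfold IEC
  fun_prop

theorem IEC_tendsto_one_general {n h s : ℕ}
    (G : Matrix (Fin h) (Fin s) (ZMod 2)) (τ : Fin s → Fin n)
    (hmd : HasMinDistGE2 G)
    (e : Fin n) :
    Filter.Tendsto (fun I : Fin n → ℝ => IEC G τ e I)
      (nhds fun _ => (1 : ℝ)) (nhds 1) ∧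
    IEC G τ e (fun _ => 1) = 1 := by
  refine ⟨?_, IEC_one hmd τ e⟩
  simpa only [IEC_one hmd τ e] using (continuous_IEC G τ e).tendsto fun _ => 1

/-- **CN EXIT function tends to 1 at the all-ones point.** For a CN type with full-rank
generator matrix whose local code has minimum distance at least `2`,
`I_{EC,e}^{(δ)}(I) → 1` as `I → (1,…,1)`; equivalently, `I_{EC,e}^{(δ)}((1,…,1)) = 1`. -/
theorem IEC_tendsto_one {n h s : ℕ} (hn : 1 ≤ n)
    (G : Matrix (Fin h) (Fin s) (ZMod 2)) (τ : Fin s → Fin n)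
    (hrk : G.rank = h) (hmd : HasMinDistGE2 G)
    (e : Fin n) (he : 0 < colCount τ e) :
    Filter.Tendsto (fun I : Fin n → ℝ => IEC G τ e I)
      (nhds fun _ => (1 : ℝ)) (nhds 1) ∧
    IEC G τ e (fun _ => 1) = 1 :=
  IEC_tendsto_one_general G τ hmd e

end MET
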